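/- arXiv:2409.00652 — 5 statements merged into one kernel-verified Lean document; each statement's English description precedes it below -/
import Mathlib

section
/- Let (a_n) and (b_n) be real sequences with b_n > 0 for all n, such that β_n := b_{n+1}/b_n > 1 for every n and lim_{n→∞} β_n = β > 1 exists. Then limsup_{n→∞} (a_{n+1} - a_n)/(b_{n+1} - b_n) ≤ (β/(β-1))·limsup_{n→∞} (a_{n+1}/b_{n+1}) - (1/(β-1))·liminf_{n→∞} (a_n/b_n). -/
open Filter

/-- limsup bound for difference quotients (Lemma on a_n/b_n). -/
theorem stmt0 (a b : ℕ → ℝ) (β L l : ℝ)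
    (hb : ∀ n, 0 < b n)
    (hβn : ∀ n, 1 < b (n + 1) / b n)
    (hβ : Tendsto (fun n => b (n + 1) / b n) atTop (nhds β))
    (hβ1 : 1 < β)
    (hL : limsup (fun n => ((a (n + 1) / b (n + 1) : ℝ) : EReal)) atTop = (L : EReal))
    (hl : liminf (fun n => ((a n / b n : ℝ) : EReal)) atTop = (l : EReal)) :
    limsup (fun n => (((a (n + 1) - a n) / (b (n + 1) - b n) : ℝ) : EReal)) atTop
      ≤ ((β / (β - 1) * L - 1 / (β - 1) * l : ℝ) : EReal) := by
  have hβ1' : β - 1 ≠ 0 := sub_ne_zero.mpr (ne_of_gt hβ1)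
  have hbne : ∀ n, b n ≠ 0 := fun n => (hb n).ne'
  have hd : ∀ n, 0 < b (n + 1) - b n := fun n =>
    sub_pos.mpr ((one_lt_div (hb n)).mp (hβn n))
  have hdne : ∀ n, b (n + 1) - b n ≠ 0 := fun n => (hd n).ne'
  -- limits of the coefficient sequences
  have hp : Tendsto (fun n => b (n + 1) / (b (n + 1) - b n)) atTop (nhds (β / (β - 1))) := by
    have h2 : Tendsto (fun n => (b (n + 1) / b n) / (b (n + 1) / b n - 1)) atTop
        (nhds (β / (β - 1))) := hβ.div (hβ.sub tendsto_const_nhds) hβ1'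
    refine h2.congr fun n => ?_
    have h3 : b n * (b (n + 1) / b n - 1) = b (n + 1) - b n := by
      rw [mul_sub, mul_div_cancel₀ _ (hbne n), mul_one]
    rw [div_div, h3]
  have hq : Tendsto (fun n => b n / (b (n + 1) - b n)) atTop (nhds (1 / (β - 1))) := by
    have h2 : Tendsto (fun n => (1 : ℝ) / (b (n + 1) / b n - 1)) atTop
        (nhds (1 / (β - 1))) := tendsto_const_nhds.div (hβ.sub tendsto_const_nhds) hβ1'
    refine h2.congr fun n => ?_
    rw [div_sub' (hbne n), one_div_div, mul_one]
  have key : ∀ ε : ℝ, 0 < ε →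
      limsup (fun n => (((a (n + 1) - a n) / (b (n + 1) - b n) : ℝ) : EReal)) atTop
        ≤ ((β / (β - 1) * (L + ε) - 1 / (β - 1) * (l - ε) : ℝ) : EReal) := by
    intro ε hε
    have hx : ∀ᶠ n in atTop, a (n + 1) / b (n + 1) < L + ε := by
      have h1 : limsup (fun n => ((a (n + 1) / b (n + 1) : ℝ) : EReal)) atTop
          < ((L + ε : ℝ) : EReal) := by
        rw [hL]; exact_mod_cast lt_add_of_pos_right L hε
      filter_upwards [eventually_lt_of_limsup_lt h1] with n hn
      exact_mod_cast hn
    have hy : ∀ᶠ n in atTop, l - ε < a n / b n := by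
      have h1 : ((l - ε : ℝ) : EReal)
          < liminf (fun n => ((a n / b n : ℝ) : EReal)) atTop := by
        rw [hl]; exact_mod_cast sub_lt_self l hε
      filter_upwards [eventually_lt_of_lt_liminf h1] with n hn
      exact_mod_cast hn
    set r : ℕ → ℝ := fun n =>
      b (n + 1) / (b (n + 1) - b n) * (L + ε) - b n / (b (n + 1) - b n) * (l - ε) with hr
    have hle : (fun n => (((a (n + 1) - a n) / (b (n + 1) - b n) : ℝ) : EReal))
        ≤ᶠ[atTop] fun n => ((r n : ℝ) : EReal) := by
      filter_upwards [hx, hy] with n hxn hyn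
      rw [EReal.coe_le_coe_iff]
      have heq : (a (n + 1) - a n) / (b (n + 1) - b n)
          = b (n + 1) / (b (n + 1) - b n) * (a (n + 1) / b (n + 1))
            - b n / (b (n + 1) - b n) * (a n / b n) := by
        have h1 := hbne n; have h2 := hbne (n + 1); have h3 := hdne n
        field_simp
      rw [heq, hr]
      have h3 : b (n + 1) / (b (n + 1) - b n) * (a (n + 1) / b (n + 1))
          ≤ b (n + 1) / (b (n + 1) - b n) * (L + ε) :=
        mul_le_mul_of_nonneg_left hxn.le (div_nonneg (hb _).le (hd n).le)
      have h4 : b n / (b (n + 1) - b n) * (l - ε)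
          ≤ b n / (b (n + 1) - b n) * (a n / b n) :=
        mul_le_mul_of_nonneg_left hyn.le (div_nonneg (hb _).le (hd n).le)
      exact sub_le_sub h3 h4
    have hrt : Tendsto r atTop
        (nhds (β / (β - 1) * (L + ε) - 1 / (β - 1) * (l - ε))) :=
      (hp.mul_const _).sub (hq.mul_const _)
    have hrt' : Tendsto (fun n => ((r n : ℝ) : EReal)) atTop
        (nhds ((β / (β - 1) * (L + ε) - 1 / (β - 1) * (l - ε) : ℝ) : EReal)) := by
      rw [EReal.tendsto_coe]; exact hrt
    calc limsup (fun n => (((a (n + 1) - a n) / (b (n + 1) - b n) : ℝ) : EReal)) atTop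
        ≤ limsup (fun n => ((r n : ℝ) : EReal)) atTop := limsup_le_limsup hle
      _ = _ := hrt'.limsup_eq
  -- let ε → 0⁺
  have hcont : Tendsto (fun ε : ℝ => ((β / (β - 1) * (L + ε) - 1 / (β - 1) * (l - ε) : ℝ) : EReal))
      (nhdsWithin 0 (Set.Ioi 0)) (nhds ((β / (β - 1) * L - 1 / (β - 1) * l : ℝ) : EReal)) := by
    rw [EReal.tendsto_coe]
    have hc : Continuous fun ε : ℝ => β / (β - 1) * (L + ε) - 1 / (β - 1) * (l - ε) := by
      continuity
    have h := (hc.tendsto 0).mono_left (nhdsWithin_le_nhds (s := Set.Ioi (0 : ℝ)))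
    simpa using h
  exact ge_of_tendsto hcont (eventually_mem_nhdsWithin.mono fun ε hε => key ε hε)
end

section
/- Let x and y be continuous functions on [0,T], p ≥ 1, t ∈ [0,T], and π a refining partition sequence of [0,T]. If limsup_{n→∞} [y]^{(p)}_{π^n}(t) = 0 and the limit [x]^{(p)}_π(t) = lim_{n→∞} [x]^{(p)}_{π^n}(t) exists (finite), then lim_{n→∞} [x+y]^{(p)}_{π^n}(t) exists and equals [x]^{(p)}_π(t). -/
open Filter

/-- The `p`-th variation of `x` along a finite partition with points `pts 0, …, pts Npts`,
summing over indices `j` with `pts j ≤ s`. -/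
noncomputable def pvar (x : ℝ → ℝ) (pts : ℕ → ℝ) (Npts : ℕ) (p s : ℝ) : ℝ :=
  ∑ j ∈ Finset.range Npts, if pts j ≤ s then |x (pts (j + 1)) - x (pts j)| ^ p else 0

lemma pvar_nonneg (x : ℝ → ℝ) (pts : ℕ → ℝ) (Npts : ℕ) (p s : ℝ) :
    0 ≤ pvar x pts Npts p s := by
  apply Finset.sum_nonneg
  intro j _
  split <;> positivity

lemma pvar_minkowski (x y : ℝ → ℝ) (pts : ℕ → ℝ) (Npts : ℕ) {p : ℝ} (s : ℝ) (hp : 1 ≤ p) :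
    (pvar (fun u => x u + y u) pts Npts p s) ^ (1 / p) ≤
      (pvar x pts Npts p s) ^ (1 / p) + (pvar y pts Npts p s) ^ (1 / p) := by
  have hp0 : (0:ℝ) < p := lt_of_lt_of_le one_pos hp
  set f : ℕ → ℝ := fun j => if pts j ≤ s then |x (pts (j + 1)) - x (pts j)| else 0 with hf
  set g : ℕ → ℝ := fun j => if pts j ≤ s then |y (pts (j + 1)) - y (pts j)| else 0 with hg
  have hfn : ∀ j ∈ Finset.range Npts, 0 ≤ f j := by
    intro j _; simp only [hf]; split <;> positivity
  have hgn : ∀ j ∈ Finset.range Npts, 0 ≤ g j := by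
    intro j _; simp only [hg]; split <;> positivity
  have h1 : pvar (fun u => x u + y u) pts Npts p s ≤
      ∑ j ∈ Finset.range Npts, (f j + g j) ^ p := by
    apply Finset.sum_le_sum
    intro j _
    simp only [hf, hg]
    split
    · apply Real.rpow_le_rpow (abs_nonneg _) _ hp0.le
      have := abs_add_le (x (pts (j+1)) - x (pts j)) (y (pts (j+1)) - y (pts j))
      calc |x (pts (j+1)) + y (pts (j+1)) - (x (pts j) + y (pts j))|
          = |(x (pts (j+1)) - x (pts j)) + (y (pts (j+1)) - y (pts j))| := by ring_nf
        _ ≤ _ := this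
    · simp [Real.zero_rpow hp0.ne']
  have hfx : ∑ j ∈ Finset.range Npts, f j ^ p = pvar x pts Npts p s := by
    apply Finset.sum_congr rfl
    intro j _
    simp only [hf]
    split <;> simp [Real.zero_rpow hp0.ne']
  have hgy : ∑ j ∈ Finset.range Npts, g j ^ p = pvar y pts Npts p s := by
    apply Finset.sum_congr rfl
    intro j _
    simp only [hg]
    split <;> simp [Real.zero_rpow hp0.ne']
  calc (pvar (fun u => x u + y u) pts Npts p s) ^ (1 / p)
      ≤ (∑ j ∈ Finset.range Npts, (f j + g j) ^ p) ^ (1 / p) :=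
        Real.rpow_le_rpow (pvar_nonneg _ _ _ _ _) h1 (by positivity)
    _ ≤ (∑ j ∈ Finset.range Npts, f j ^ p) ^ (1 / p)
        + (∑ j ∈ Finset.range Npts, g j ^ p) ^ (1 / p) :=
        Real.Lp_add_le_of_nonneg (Finset.range Npts) hp hfn hgn
    _ = _ := by rw [hfx, hgy]

/-- adding a function with vanishing p-th variation preserves the
existence and the value of the p-th variation limit. -/
theorem stmt4 (T p s L : ℝ) (x y : ℝ → ℝ) (t : ℕ → ℕ → ℝ) (N : ℕ → ℕ)
    (hT : 0 < T) (hp : 1 ≤ p) (hs : s ∈ Set.Icc 0 T)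
    (hx : ContinuousOn x (Set.Icc 0 T)) (hy : ContinuousOn y (Set.Icc 0 T))
    (hN : ∀ n, 0 < N n)
    (h0 : ∀ n, t n 0 = 0) (hTend : ∀ n, t n (N n) = T)
    (hmono : ∀ n, ∀ j < N n, t n j < t n (j + 1))
    (href : ∀ n, ∀ j ≤ N n, ∃ k ≤ N (n + 1), t (n + 1) k = t n j)
    (hyvar : limsup (fun n => ((pvar y (t n) (N n) p s : ℝ) : EReal)) atTop = 0)
    (hxvar : Tendsto (fun n => pvar x (t n) (N n) p s) atTop (nhds L)) :
    Tendsto (fun n => pvar (fun u => x u + y u) (t n) (N n) p s) atTop (nhds L) := by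
  have hp0 : (0:ℝ) < p := lt_of_lt_of_le one_pos hp
  set a : ℕ → ℝ := fun n => pvar x (t n) (N n) p s with ha
  set b : ℕ → ℝ := fun n => pvar y (t n) (N n) p s with hb
  set c : ℕ → ℝ := fun n => pvar (fun u => x u + y u) (t n) (N n) p s with hc
  -- b tends to 0
  have hbn : ∀ n, 0 ≤ b n := fun n => pvar_nonneg _ _ _ _ _
  have hliminf : liminf (fun n => ((b n : ℝ) : EReal)) atTop = 0 := by
    apply le_antisymm
    · rw [← hyvar]; exact liminf_le_limsup
    · exact le_liminf_of_le (by isBoundedDefault)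
        (Eventually.of_forall fun n => by exact_mod_cast hbn n)
  have hbE : Tendsto (fun n => ((b n : ℝ) : EReal)) atTop (nhds (0 : EReal)) :=
    tendsto_of_liminf_eq_limsup hliminf hyvar (by isBoundedDefault) (by isBoundedDefault)
  have hb0 : Tendsto b atTop (nhds 0) := by
    rw [← EReal.coe_zero] at hbE
    exact EReal.tendsto_coe.mp hbE
  -- L nonneg
  have hL : 0 ≤ L := ge_of_tendsto hxvar
    (Eventually.of_forall fun n => pvar_nonneg _ _ _ _ _)
  -- roots
  have hbr : Tendsto (fun n => b n ^ (1/p)) atTop (nhds 0) := by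
    have hcont : ContinuousAt (fun z : ℝ => z ^ (1/p)) 0 :=
      Real.continuousAt_rpow_const 0 (1/p) (Or.inr (by positivity))
    have h2 := hcont.tendsto.comp hb0
    rw [Real.zero_rpow (by positivity : (1:ℝ)/p ≠ 0)] at h2
    exact h2
  have har : Tendsto (fun n => a n ^ (1/p)) atTop (nhds (L ^ (1/p))) := by
    have hcont : ContinuousAt (fun z : ℝ => z ^ (1/p)) L :=
      Real.continuousAt_rpow_const L (1/p) (Or.inr (by positivity))
    exact hcont.tendsto.comp hxvar
  -- bounds
  have hub : ∀ n, c n ^ (1/p) ≤ a n ^ (1/p) + b n ^ (1/p) := fun n =>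
    pvar_minkowski x y (t n) (N n) s hp
  have hlb : ∀ n, a n ^ (1/p) - b n ^ (1/p) ≤ c n ^ (1/p) := by
    intro n
    rw [sub_le_iff_le_add]
    have hx2 : a n = pvar (fun u => (x u + y u) + (- y u)) (t n) (N n) p s := by
      simp only [ha]
      congr 1
      funext u; ring
    have hy2 : pvar (fun u => - y u) (t n) (N n) p s = b n := by
      simp only [hb, pvar]
      apply Finset.sum_congr rfl
      intro j _
      have : |-y (t n (j + 1)) - -y (t n j)| = |y (t n (j + 1)) - y (t n j)| := by
        rw [← abs_neg]; ring_nf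
      rw [this]
    have := pvar_minkowski (fun u => x u + y u) (fun u => - y u) (t n) (N n) s hp
    rw [hy2] at this
    calc a n ^ (1/p) = (pvar (fun u => (x u + y u) + (- y u)) (t n) (N n) p s) ^ (1/p) := by
          rw [← hx2]
      _ ≤ _ := this
  -- squeeze
  have hcr : Tendsto (fun n => c n ^ (1/p)) atTop (nhds (L ^ (1/p))) := by
    have h1 : Tendsto (fun n => a n ^ (1/p) - b n ^ (1/p)) atTop (nhds (L ^ (1/p))) := by
      simpa using har.sub hbr
    have h2 : Tendsto (fun n => a n ^ (1/p) + b n ^ (1/p)) atTop (nhds (L ^ (1/p))) := by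
      simpa using har.add hbr
    exact tendsto_of_tendsto_of_tendsto_of_le_of_le h1 h2 hlb hub
  -- raise to power p
  have hcont : ContinuousAt (fun z : ℝ => z ^ p) (L ^ (1/p)) :=
    Real.continuousAt_rpow_const _ p (Or.inr hp0.le)
  have hfin := hcont.tendsto.comp hcr
  have key : ∀ n, (c n ^ (1/p)) ^ p = c n := fun n => by
    rw [one_div, Real.rpow_inv_rpow (pvar_nonneg _ _ _ _ _) hp0.ne']
  have keyL : (L ^ (1/p)) ^ p = L := by
    rw [one_div, Real.rpow_inv_rpow hL hp0.ne']
  have h3 : Tendsto (fun n => (c n ^ (1/p)) ^ p) atTop (nhds ((L ^ (1/p)) ^ p)) := hfin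
  simp only [key, keyL] at h3
  exact h3
end

section
/- For any q > 1, any ε > 0, and any continuous function x : [0,T] → ℝ, there exists a finite partition π = {0 = t_0 < t_1 < ... < t_m = T} of [0,T] such that ∑_{j=0}^{m-1} |x(t_{j+1}) - x(t_j)|^q < ε. -/
private lemma stmt6_aux (T q ε : ℝ) (x : ℝ → ℝ)
    (hT : 0 < T) (hq : 1 < q) (hε : 0 < ε)
    (hx : ContinuousOn x (Set.Icc 0 T)) (hlt : x 0 < x T) :
    ∃ (m : ℕ) (pts : ℕ → ℝ), 0 < m ∧ pts 0 = 0 ∧ pts m = T ∧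
      (∀ j < m, pts j < pts (j + 1)) ∧
      (∑ j ∈ Finset.range m, |x (pts (j + 1)) - x (pts j)| ^ q) < ε := by
  set D := x T - x 0 with hD
  have hD0 : 0 < D := sub_pos.2 hlt
  have hq1 : 0 < q - 1 := by linarith
  have hbase : 0 < (D ^ q / ε) ^ (1 / (q - 1)) :=
    Real.rpow_pos_of_pos (div_pos (Real.rpow_pos_of_pos hD0 q) hε) _
  obtain ⟨n, hn⟩ := exists_nat_gt ((D ^ q / ε) ^ (1 / (q - 1)))
  have hnpos : 0 < (n : ℝ) := lt_trans hbase hn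
  have hn0 : n ≠ 0 := (Nat.cast_pos.1 hnpos).ne'
  set c : ℕ → ℝ := fun k => x 0 + k * D / n with hc
  set S : ℕ → Set ℝ := fun k => {t ∈ Set.Icc 0 T | x t = c k} with hS
  set pts : ℕ → ℝ := fun k => if k = 0 then 0 else sSup (S k) with hpts
  -- basic facts about c
  have hck : ∀ k ≤ n, c k ∈ Set.Icc (x 0) (x T) := by
    intro k hk
    have hkn : (k : ℝ) ≤ n := Nat.cast_le.2 hk
    constructor
    · simp only [hc]
      have : 0 ≤ (k : ℝ) * D / n := by positivity
      linarith
    · simp only [hc]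
      have h1 : (k : ℝ) * D / n ≤ D := by
        rw [div_le_iff₀ hnpos]
        nlinarith
      have : x T = x 0 + D := by simp [hD]
      linarith
  -- compactness of S k
  have hScompact : ∀ k, IsCompact (S k) := by
    intro k
    have hclosed : IsClosed (S k) := by
      have := hx.preimage_isClosed_of_isClosed isClosed_Icc
        (isClosed_singleton (x := c k))
      simpa [hS, Set.inter_def, Set.preimage] using this
    exact IsCompact.of_isClosed_subset isCompact_Icc hclosed (fun t ht => ht.1)
  have hSne : ∀ k ≤ n, (S k).Nonempty := by
    intro k hk
    obtain ⟨t, ht, hxt⟩ := intermediate_value_Icc hT.le hx (hck k hk)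
    exact ⟨t, ht, hxt⟩
  have hmem : ∀ k, k ≤ n → k ≠ 0 → pts k ∈ S k := by
    intro k hk hk0
    simp only [hpts, if_neg hk0]
    exact (hScompact k).sSup_mem (hSne k hk)
  -- x (pts k) = c k and pts k ∈ Icc 0 T, for all k ≤ n
  have hkey : ∀ k ≤ n, pts k ∈ Set.Icc 0 T ∧ x (pts k) = c k := by
    intro k hk
    rcases eq_or_ne k 0 with rfl | hk0
    · refine ⟨?_, ?_⟩
      · simp [hpts, Set.mem_Icc, hT.le]
      · simp [hpts, hc]
    · obtain ⟨h1, h2⟩ := hmem k hk hk0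
      exact ⟨h1, h2⟩
  -- pts n = T
  have hptsT : pts n = T := by
    have hTmem : T ∈ S n := by
      refine ⟨Set.right_mem_Icc.2 hT.le, ?_⟩
      simp only [hc, hD]
      field_simp
      ring
    have hub : pts n ≤ T := ((hkey n le_rfl).1).2
    have hbdd : BddAbove (S n) := (hScompact n).bddAbove
    have : T ≤ sSup (S n) := le_csSup hbdd hTmem
    simp only [hpts, if_neg hn0]
    simp only [hpts, if_neg hn0] at hub
    linarith
  -- strict monotonicity
  have hmono : ∀ j < n, pts j < pts (j + 1) := by
    intro j hj
    obtain ⟨hjIcc, hjval⟩ := hkey j hj.le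
    have hj1 : j + 1 ≤ n := hj
    have hcmono : c j < c (j + 1) := by
      simp only [hc, Nat.cast_add, Nat.cast_one]
      have h1 : (j : ℝ) * D < ((j : ℝ) + 1) * D := by nlinarith
      have := (div_lt_div_iff_of_pos_right hnpos).2 h1
      linarith
    have hsub : Set.Icc (pts j) T ⊆ Set.Icc 0 T := Set.Icc_subset_Icc hjIcc.1 le_rfl
    obtain ⟨s, hs, hxs⟩ := intermediate_value_Icc hjIcc.2 (hx.mono hsub)
      (by rw [hjval]; exact ⟨hcmono.le, (hck _ hj1).2⟩)
    have hsS : s ∈ S (j + 1) := ⟨⟨le_trans hjIcc.1 hs.1, hs.2⟩, hxs⟩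
    have hsle : s ≤ pts (j + 1) := by
      simp only [hpts, if_neg (Nat.succ_ne_zero j)]
      exact le_csSup (hScompact _).bddAbove hsS
    have hne : pts j ≠ s := by
      intro hh
      rw [← hh, hjval] at hxs
      exact (ne_of_lt hcmono) hxs
    exact lt_of_lt_of_le (lt_of_le_of_ne hs.1 hne) hsle
  -- conclusion
  refine ⟨n, pts, Nat.pos_of_ne_zero hn0, by simp [hpts], hptsT, hmono, ?_⟩
  have hterm : ∀ j ∈ Finset.range n, |x (pts (j + 1)) - x (pts j)| ^ q = (D / n) ^ q := by
    intro j hj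
    rw [Finset.mem_range] at hj
    rw [(hkey (j + 1) hj).2, (hkey j hj.le).2]
    have hdiff : c (j + 1) - c j = D / n := by
      simp only [hc, Nat.cast_add, Nat.cast_one]
      ring
    rw [hdiff, abs_of_pos (div_pos hD0 hnpos)]
  rw [Finset.sum_congr rfl hterm, Finset.sum_const, Finset.card_range, nsmul_eq_mul]
  have hkey2 : D ^ q / ε < (n : ℝ) ^ (q - 1) := by
    calc D ^ q / ε = ((D ^ q / ε) ^ (1 / (q - 1))) ^ (q - 1) := by
          rw [← Real.rpow_mul (div_pos (Real.rpow_pos_of_pos hD0 q) hε).le,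
            one_div_mul_cancel (by linarith : q - 1 ≠ 0), Real.rpow_one]
      _ < (n : ℝ) ^ (q - 1) := Real.rpow_lt_rpow hbase.le hn hq1
  have hnq : (0:ℝ) < (n : ℝ) ^ q := Real.rpow_pos_of_pos hnpos q
  have heq : (n : ℝ) * (D / n) ^ q = D ^ q / (n : ℝ) ^ (q - 1) := by
    rw [Real.div_rpow hD0.le hnpos.le, Real.rpow_sub hnpos, Real.rpow_one]
    field_simp
  rw [heq, div_lt_iff₀ (Real.rpow_pos_of_pos hnpos _)]
  have h2 : D ^ q < (n : ℝ) ^ (q - 1) * ε := (div_lt_iff₀ hε).1 hkey2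
  linarith

/-- every continuous function admits a finite partition along which
its q-th variation is less than ε, for any q > 1. -/
theorem stmt6 (T q ε : ℝ) (x : ℝ → ℝ)
    (hT : 0 < T) (hq : 1 < q) (hε : 0 < ε)
    (hx : ContinuousOn x (Set.Icc 0 T)) :
    ∃ (m : ℕ) (pts : ℕ → ℝ), 0 < m ∧ pts 0 = 0 ∧ pts m = T ∧
      (∀ j < m, pts j < pts (j + 1)) ∧
      (∑ j ∈ Finset.range m, |x (pts (j + 1)) - x (pts j)| ^ q) < ε := by
  rcases lt_trichotomy (x 0) (x T) with h | h | h
  · exact stmt6_aux T q ε x hT hq hε hx h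
  · refine ⟨1, fun j => if j = 0 then 0 else T, one_pos, rfl, rfl, ?_, ?_⟩
    · intro j hj
      interval_cases j
      simpa using hT
    · have : x (if (1:ℕ) = 0 then (0:ℝ) else T) - x (if (0:ℕ) = 0 then (0:ℝ) else T) = 0 := by
        simp [h]
      rw [Finset.sum_range_one, this, abs_zero, Real.zero_rpow (by linarith)]
      exact hε
  · obtain ⟨m, pts, hm, h0, hmT, hmono, hsum⟩ :=
      stmt6_aux T q ε (-x) hT hq hε hx.neg (by simpa using h)
    refine ⟨m, pts, hm, h0, hmT, hmono, ?_⟩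
    have : ∀ j, |(-x) (pts (j + 1)) - (-x) (pts j)| = |x (pts (j + 1)) - x (pts j)| := by
      intro j
      simp only [Pi.neg_apply]
      rw [show -x (pts (j + 1)) - -x (pts j) = -(x (pts (j + 1)) - x (pts j)) by ring, abs_neg]
    calc (∑ j ∈ Finset.range m, |x (pts (j + 1)) - x (pts j)| ^ q)
        = ∑ j ∈ Finset.range m, |(-x) (pts (j + 1)) - (-x) (pts j)| ^ q := by
          exact Finset.sum_congr rfl fun j _ => by rw [this j]
      _ < ε := hsum
end

section
/- Let x : [0,1] → ℝ be continuous with x(0) = 0 and x(1) = 1. For q > 1 and any N ∈ ℕ with N^{1-q} < ε, define t_j := min{t ≥ 0 : x(t) = j/N} for j = 0,...,N. Then t_0 ≤ t_1 ≤ ... ≤ t_N and the q-th variation of x along the partition given by these points (together with 1 if t_N < 1) equals N·(1/N)^q = N^{1-q} < ε. -/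
/-- the hitting-time partition construction gives q-th variation
exactly N^(1-q), which is less than ε. -/
theorem stmt7 (q ε : ℝ) (x : ℝ → ℝ) (N : ℕ) (t : ℕ → ℝ)
    (hq : 1 < q) (hε : 0 < ε)
    (hx : ContinuousOn x (Set.Icc (0 : ℝ) 1))
    (hx0 : x 0 = 0) (hx1 : x 1 = 1)
    (hN0 : 0 < N) (hNε : (N : ℝ) ^ ((1 : ℝ) - q) < ε)
    (ht : ∀ j ≤ N, t j = sInf {s : ℝ | 0 ≤ s ∧ x s = (j : ℝ) / N}) :
    (∀ j < N, t j ≤ t (j + 1)) ∧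
    ((∑ j ∈ Finset.range N, |x (t (j + 1)) - x (t j)| ^ q) +
        (if t N < 1 then |x 1 - x (t N)| ^ q else 0)) = (N : ℝ) ^ ((1 : ℝ) - q) ∧
    (N : ℝ) ^ ((1 : ℝ) - q) < ε := by
  have hN : (0:ℝ) < N := Nat.cast_pos.mpr hN0
  have key : ∀ j ≤ N, 0 ≤ t j ∧ t j ≤ 1 ∧ x (t j) = (j:ℝ)/N := by
    intro j hj
    have hjN : (j:ℝ)/N ∈ Set.Icc (0:ℝ) 1 := by
      constructor
      · positivity
      · rw [div_le_one hN]; exact_mod_cast hj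
    have hiv := intermediate_value_Icc (by norm_num : (0:ℝ) ≤ 1) hx
    rw [hx0, hx1] at hiv
    obtain ⟨c, hc, hxc⟩ := hiv hjN
    set S := {s : ℝ | 0 ≤ s ∧ x s = (j:ℝ)/N} with hS
    have hcS : c ∈ S := ⟨hc.1, hxc⟩
    have hbdd : BddBelow S := ⟨0, fun s hs => hs.1⟩
    set T := S ∩ Set.Icc 0 c with hT
    have hcT : c ∈ T := ⟨hcS, hc.1, le_rfl⟩
    have hTne : T.Nonempty := ⟨c, hcT⟩
    have hTbdd : BddBelow T := hbdd.mono Set.inter_subset_left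
    have hTc : IsClosed T := by
      have hTeq : T = Set.Icc 0 c ∩ x ⁻¹' {(j:ℝ)/N} := by
        ext s
        simp only [hT, hS, Set.mem_inter_iff, Set.mem_setOf_eq, Set.mem_Icc,
          Set.mem_preimage, Set.mem_singleton_iff]
        tauto
      rw [hTeq]
      exact (hx.mono (Set.Icc_subset_Icc le_rfl hc.2)).preimage_isClosed_of_isClosed
        isClosed_Icc isClosed_singleton
    have hST : sInf S = sInf T := by
      apply le_antisymm
      · exact csInf_le_csInf hbdd hTne Set.inter_subset_left
      · apply le_csInf ⟨c, hcS⟩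
        intro s hs
        rcases le_or_gt s c with h | h
        · exact csInf_le hTbdd ⟨hs, hs.1, h⟩
        · exact (csInf_le hTbdd hcT).trans h.le
    have hmem : sInf T ∈ T := hTc.csInf_mem hTne hTbdd
    rw [ht j hj, hST]
    exact ⟨hmem.1.1, hmem.2.2.trans hc.2, hmem.1.2⟩
  have hmono : ∀ j < N, t j ≤ t (j + 1) := by
    intro j hj
    obtain ⟨h0, h1, hval⟩ := key (j+1) hj
    have hiv : Set.Icc (0:ℝ) (((j+1:ℕ):ℝ)/N) ⊆ x '' Set.Icc 0 (t (j+1)) := by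
      have h2 := intermediate_value_Icc h0 (hx.mono (Set.Icc_subset_Icc le_rfl h1))
      rwa [hx0, hval] at h2
    have hjmem : (j:ℝ)/N ∈ Set.Icc (0:ℝ) (((j+1:ℕ):ℝ)/N) := by
      constructor
      · positivity
      · gcongr
        push_cast; linarith
    have hmem : (j:ℝ)/N ∈ x '' Set.Icc 0 (t (j+1)) := hiv hjmem
    obtain ⟨s, hs, hxs⟩ := hmem
    rw [ht j (le_of_lt hj)]
    have hbddj : BddBelow {s : ℝ | 0 ≤ s ∧ x s = (j:ℝ)/N} := ⟨0, fun u hu => hu.1⟩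
    exact (csInf_le hbddj ⟨hs.1, hxs⟩).trans hs.2
  refine ⟨hmono, ?_, hNε⟩
  have hq0 : q ≠ 0 := by linarith
  have hsum : ∀ j ∈ Finset.range N, |x (t (j + 1)) - x (t j)| ^ q = ((N:ℝ)⁻¹) ^ q := by
    intro j hjr
    have hj := Finset.mem_range.mp hjr
    rw [(key j hj.le).2.2, (key (j+1) hj).2.2]
    have : ((j+1:ℕ):ℝ)/N - (j:ℝ)/N = (N:ℝ)⁻¹ := by
      push_cast; field_simp; ring
    rw [this, abs_of_pos (by positivity)]
  rw [Finset.sum_congr rfl hsum, Finset.sum_const, Finset.card_range]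
  have hxtN : x (t N) = 1 := by
    rw [(key N le_rfl).2.2, div_self hN.ne']
  have hif : (if t N < 1 then |x 1 - x (t N)| ^ q else 0) = 0 := by
    split
    · rw [hx1, hxtN, sub_self, abs_zero, Real.zero_rpow hq0]
    · rfl
  rw [hif, add_zero, nsmul_eq_mul, Real.rpow_sub hN, Real.rpow_one,
    Real.inv_rpow hN.le, div_eq_mul_inv]
end

section
/- For every continuous function x : [0,T] → ℝ and every q > 1, there exists a refining partition sequence π = (π^n) of [0,T] with mesh tending to 0 such that lim_{n→∞} [x]^{(q)}_{π^n}(T) = 0. Consequently, inf{ p^π(x) : π a refining partition sequence with vanishing mesh } = 1. -/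
open Filter

/-- A finite partition of `[a,b]` with mesh `< h` and `q`-variation `≤ e`. -/
def IsPart (x : ℝ → ℝ) (a b h e q : ℝ) (t : ℕ → ℝ) (N : ℕ) : Prop :=
  0 < N ∧ t 0 = a ∧ t N = b ∧ (∀ j < N, t j < t (j + 1)) ∧
  (∀ j < N, t (j + 1) - t j < h) ∧
  (∑ j ∈ Finset.range N, |x (t (j + 1)) - x (t j)| ^ q) ≤ e

lemma IsPart.mono {x : ℝ → ℝ} {a b h e e' q : ℝ} {t : ℕ → ℝ} {N : ℕ}
    (hp : IsPart x a b h e q t N) (he : e ≤ e') : IsPart x a b h e' q t N :=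
  ⟨hp.1, hp.2.1, hp.2.2.1, hp.2.2.2.1, hp.2.2.2.2.1, hp.2.2.2.2.2.trans he⟩

lemma part_mono {t : ℕ → ℝ} {N : ℕ} (hs : ∀ j < N, t j < t (j + 1)) :
    ∀ {i k : ℕ}, i ≤ k → k ≤ N → t i ≤ t k := by
  intro i k hik hkN
  induction k with
  | zero => simp_all
  | succ n ih =>
    rcases Nat.lt_or_ge i (n + 1) with hlt | hge
    · have h1 : t i ≤ t n := ih (by omega) (by omega)
      have h2 : t n < t (n + 1) := hs n (by omega)
      linarith
    · have : i = n + 1 := by omega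
      simp [this]

/-- The monotone chain lemma: partition `[c,d]` along last-hitting times of
equally spaced levels between `x c` and `x d`. -/
lemma chain {x : ℝ → ℝ} (hx : Continuous x) {c d : ℝ} (hcd : c < d) {q : ℝ} (hq : 0 < q)
    {m : ℕ} (hm : 0 < m) :
    ∃ (v : ℕ → ℝ) (N : ℕ), 0 < N ∧ v 0 = c ∧ v N = d ∧ (∀ j < N, v j < v (j + 1)) ∧
      (∑ j ∈ Finset.range N, |x (v (j + 1)) - x (v j)| ^ q)
        ≤ m * (|x d - x c| / m) ^ q := by
  have hm' : (0:ℝ) < m := by exact_mod_cast hm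
  by_cases hxe : x c = x d
  · refine ⟨fun i => if i = 0 then c else d, 1, one_pos, rfl, rfl, ?_, ?_⟩
    · intro j hj; interval_cases j; simpa using hcd
    · have : x d - x c = 0 := by rw [hxe]; ring
      simp [this, Real.zero_rpow hq.ne']
  · set Δ : ℝ := (x d - x c) / m with hΔ
    have hΔne : Δ ≠ 0 := div_ne_zero (sub_ne_zero.mpr (Ne.symm hxe)) hm'.ne'
    set μ : ℕ → ℝ := fun i => x c + i * Δ with hμ
    set S : ℕ → Set ℝ := fun i => Set.Icc c d ∩ x ⁻¹' {μ i} with hS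
    have hSc : ∀ i, IsCompact (S i) :=
      fun i => isCompact_Icc.inter_right (isClosed_singleton.preimage hx)
    have hmd : (m:ℝ) * Δ = x d - x c := by rw [hΔ]; field_simp [hm'.ne']
    have hμmem : ∀ i ≤ m, μ i ∈ Set.uIcc (x c) (x d) := by
      intro i hi
      have hi' : (i:ℝ) ≤ m := by exact_mod_cast hi
      have h0 : (0:ℝ) ≤ i := Nat.cast_nonneg i
      rcases le_total (x c) (x d) with hle | hle
      · have hΔ0 : 0 ≤ Δ := div_nonneg (by linarith) hm'.le
        rw [Set.uIcc_of_le hle]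
        refine ⟨?_, ?_⟩ <;> simp only [hμ] <;> nlinarith
      · have hΔ0 : Δ ≤ 0 := div_nonpos_of_nonpos_of_nonneg (by linarith) hm'.le
        rw [Set.uIcc_of_ge hle]
        refine ⟨?_, ?_⟩ <;> simp only [hμ] <;> nlinarith
    have hSne : ∀ i ≤ m, (S i).Nonempty := by
      intro i hi
      obtain ⟨s, hs, hxs⟩ := intermediate_value_uIcc
        (hx.continuousOn : ContinuousOn x (Set.uIcc c d)) (hμmem i hi)
      exact ⟨s, by rwa [Set.uIcc_of_le hcd.le] at hs, hxs⟩
    set v : ℕ → ℝ := fun i => if i = 0 then c else sSup (S i) with hv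
    have hvS : ∀ i, 1 ≤ i → i ≤ m → v i ∈ S i := by
      intro i h1 h2
      have hne : i ≠ 0 := by omega
      show (if i = 0 then c else sSup (S i)) ∈ S i
      rw [if_neg hne]
      exact (hSc i).sSup_mem (hSne i h2)
    have hxv : ∀ i ≤ m, x (v i) = μ i := by
      intro i hi
      rcases Nat.eq_zero_or_pos i with h0 | h1
      · subst h0; simp [hv, hμ]
      · exact (hvS i h1 hi).2
    have hvIcc : ∀ i ≤ m, v i ∈ Set.Icc c d := by
      intro i hi
      rcases Nat.eq_zero_or_pos i with h0 | h1
      · subst h0; simp [hv, hcd.le]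
      · exact (hvS i h1 hi).1
    have hxd : x d = μ m := by
      simp only [hμ]; rw [hmd]; ring
    have hdS : d ∈ S m := ⟨Set.right_mem_Icc.mpr hcd.le, hxd⟩
    have hvm : v m = d := by
      have h1 : v m ≤ d := (hvIcc m le_rfl).2
      have h2 : d ≤ v m := by
        have h3 := le_csSup (hSc m).bddAbove hdS
        have : v m = sSup (S m) := by
          show (if m = 0 then c else sSup (S m)) = _
          rw [if_neg hm.ne']
        linarith
      linarith
    have hlt : ∀ j < m, v j < v (j + 1) := by
      intro j hj
      have hj1 : j + 1 ≤ m := hj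
      have hvjd : v j ≤ d := (hvIcc j hj.le).2
      have key : μ (j + 1) ∈ Set.uIcc (x (v j)) (x d) := by
        rw [hxv j hj.le, hxd]
        have hstep : μ (j + 1) = μ j + Δ := by simp only [hμ]; push_cast; ring
        have hrest : μ m = μ (j + 1) + ((m - (j+1) : ℕ) : ℝ) * Δ := by
          simp only [hμ]; push_cast [Nat.cast_sub hj1]; ring
        have hk : (0:ℝ) ≤ ((m - (j+1) : ℕ) : ℝ) := Nat.cast_nonneg _
        rcases lt_or_gt_of_ne hΔne with hneg | hpos
        · rw [Set.uIcc_of_ge (by nlinarith)]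
          exact ⟨by nlinarith, by nlinarith⟩
        · rw [Set.uIcc_of_le (by nlinarith)]
          exact ⟨by nlinarith, by nlinarith⟩
      obtain ⟨s, hs, hxs⟩ := intermediate_value_uIcc
        (hx.continuousOn : ContinuousOn x (Set.uIcc (v j) d)) key
      rw [Set.uIcc_of_le hvjd] at hs
      have hsS : s ∈ S (j + 1) :=
        ⟨⟨le_trans (hvIcc j hj.le).1 hs.1, hs.2⟩, hxs⟩
      have hle : v j ≤ v (j + 1) := by
        refine le_trans hs.1 ?_
        have h3 := le_csSup (hSc (j+1)).bddAbove hsS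
        have h4 : v (j+1) = sSup (S (j+1)) := by
          show (if j + 1 = 0 then c else sSup (S (j+1))) = _
          rw [if_neg (by omega : j + 1 ≠ 0)]
        linarith
      refine lt_of_le_of_ne hle ?_
      intro heq
      have h1 := hxv j hj.le
      have h2 := hxv (j + 1) hj1
      rw [heq, h2] at h1
      simp only [hμ] at h1
      have hcast : ((j+1:ℕ):ℝ) = (j:ℝ) + 1 := by push_cast; ring
      rw [hcast] at h1
      apply hΔne
      nlinarith [h1]
    have habs : |Δ| = |x d - x c| / m := by
      rw [hΔ, abs_div, Nat.abs_cast]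
    refine ⟨v, m, hm, if_pos rfl, hvm, hlt, le_of_eq ?_⟩
    have hterm : ∀ j ∈ Finset.range m,
        |x (v (j + 1)) - x (v j)| ^ q = (|x d - x c| / m) ^ q := by
      intro j hj
      rw [Finset.mem_range] at hj
      rw [hxv (j+1) hj, hxv j hj.le]
      have : μ (j + 1) - μ j = Δ := by
        simp only [hμ]; push_cast; ring
      rw [this, habs]
    rw [Finset.sum_congr rfl hterm, Finset.sum_const, Finset.card_range, nsmul_eq_mul]

/-- Concatenation of two partitions. -/
lemma glue {x : ℝ → ℝ} {a b c h e1 e2 q : ℝ} {u v : ℕ → ℝ} {M1 M2 : ℕ}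
    (h1 : IsPart x a b h e1 q u M1) (h2 : IsPart x b c h e2 q v M2) :
    ∃ w : ℕ → ℝ, IsPart x a c h (e1 + e2) q w (M1 + M2) ∧
      (∀ j ≤ M1, w j = u j) ∧ (∀ j ≤ M2, w (M1 + j) = v j) := by
  obtain ⟨hN1, hu0, huN, hus, hum, husum⟩ := h1
  obtain ⟨hN2, hv0, hvN, hvs, hvm, hvsum⟩ := h2
  set w : ℕ → ℝ := fun k => if k ≤ M1 then u k else v (k - M1) with hw
  have wl : ∀ k ≤ M1, w k = u k := fun k hk => if_pos hk
  have wr : ∀ k, M1 ≤ k → w k = v (k - M1) := by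
    intro k hk
    rcases eq_or_lt_of_le hk with h | h
    · subst h; simp only [hw, if_pos le_rfl, Nat.sub_self, huN, hv0]
    · simp only [hw, if_neg (by omega : ¬ k ≤ M1)]
  refine ⟨w, ⟨by omega, by rw [wl 0 (by omega), hu0], ?_, ?_, ?_, ?_⟩, wl, ?_⟩
  · rw [wr (M1 + M2) (by omega)]
    simp [hvN]
  · intro j hj
    rcases le_or_gt (j + 1) M1 with hle | hgt
    · rw [wl j (by omega), wl (j+1) hle]
      exact hus j (by omega)
    · have hM1j : M1 ≤ j := by omega
      rw [wr j hM1j, wr (j+1) (by omega)]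
      have : j + 1 - M1 = (j - M1) + 1 := by omega
      rw [this]
      exact hvs (j - M1) (by omega)
  · intro j hj
    rcases le_or_gt (j + 1) M1 with hle | hgt
    · rw [wl j (by omega), wl (j+1) hle]
      exact hum j (by omega)
    · have hM1j : M1 ≤ j := by omega
      rw [wr j hM1j, wr (j+1) (by omega)]
      have : j + 1 - M1 = (j - M1) + 1 := by omega
      rw [this]
      exact hvm (j - M1) (by omega)
  · rw [Finset.sum_range_add]
    have e1' : (∑ j ∈ Finset.range M1, |x (w (j + 1)) - x (w j)| ^ q)
        = ∑ j ∈ Finset.range M1, |x (u (j + 1)) - x (u j)| ^ q := by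
      refine Finset.sum_congr rfl ?_
      intro j hj
      rw [Finset.mem_range] at hj
      rw [wl j (by omega), wl (j+1) (by omega)]
    have e2' : (∑ j ∈ Finset.range M2, |x (w (M1 + j + 1)) - x (w (M1 + j))| ^ q)
        = ∑ j ∈ Finset.range M2, |x (v (j + 1)) - x (v j)| ^ q := by
      refine Finset.sum_congr rfl ?_
      intro j hj
      rw [wr (M1 + j) (by omega), wr (M1 + j + 1) (by omega)]
      have ha : M1 + j + 1 - M1 = j + 1 := by omega
      have hb : M1 + j - M1 = j := by omega
      rw [ha, hb]
    rw [e1', e2']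
    exact add_le_add husum hvsum
  · intro j hj
    rw [wr (M1 + j) (by omega)]
    have : M1 + j - M1 = j := by omega
    rw [this]

/-- Refine every interval of a partition. -/
lemma refineStep {x : ℝ → ℝ} {h e q : ℝ} {t : ℕ → ℝ} {N : ℕ} (hN : 0 < N)
    (H : ∀ j < N, ∃ (v : ℕ → ℝ) (M : ℕ), IsPart x (t j) (t (j + 1)) h e q v M) :
    ∃ (t' : ℕ → ℝ) (N' : ℕ), IsPart x (t 0) (t N) h (N * e) q t' N' ∧
      ∀ j ≤ N, ∃ k ≤ N', t' k = t j := by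
  have key : ∀ n, 0 < n → n ≤ N → ∃ (t' : ℕ → ℝ) (N' : ℕ),
      IsPart x (t 0) (t n) h (n * e) q t' N' ∧ ∀ j ≤ n, ∃ k ≤ N', t' k = t j := by
    intro n
    induction n with
    | zero => omega
    | succ n ih =>
      intro _ hn1
      rcases Nat.eq_zero_or_pos n with hn0 | hn0
      · subst hn0
        obtain ⟨v, M, hvM⟩ := H 0 (by omega)
        refine ⟨v, M, hvM.mono (le_of_eq (by push_cast; ring)), ?_⟩
        intro j hj
        interval_cases j
        · exact ⟨0, by omega, hvM.2.1⟩
        · exact ⟨M, le_rfl, hvM.2.2.1⟩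
      · obtain ⟨t1, N1, hp1, hold⟩ := ih hn0 (by omega)
        obtain ⟨v, M, hvM⟩ := H n (by omega)
        obtain ⟨w, hwp, hwl, hwr⟩ := glue hp1 hvM
        refine ⟨w, N1 + M, hwp.mono (le_of_eq (by push_cast; ring)), ?_⟩
        intro j hj
        rcases le_or_gt j n with hjn | hjn
        · obtain ⟨k, hk, hk2⟩ := hold j hjn
          exact ⟨k, by omega, by rw [hwl k hk]; exact hk2⟩
        · have hj' : j = n + 1 := by omega
          subst hj'
          exact ⟨N1 + M, le_rfl, by rw [hwr M le_rfl]; exact hvM.2.2.1⟩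
  exact key N hN le_rfl

/-- Core lemma: a partition of `[a,b]` with mesh `< h` and `q`-variation `≤ ε`. -/
lemma core {x : ℝ → ℝ} (hx : Continuous x) {q : ℝ} (hq : 1 < q) {a b h ε : ℝ}
    (hab : a < b) (hh : 0 < h) (hε : 0 < ε) :
    ∃ (t : ℕ → ℝ) (N : ℕ), IsPart x a b h ε q t N := by
  obtain ⟨C, hC⟩ := isCompact_Icc.exists_bound_of_continuousOn
    (hx.continuousOn : ContinuousOn x (Set.Icc a b))
  have hC0 : 0 ≤ C := le_trans (norm_nonneg _) (hC a (Set.left_mem_Icc.mpr hab.le))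
  set D : ℝ := 2 * C + 1 with hD
  have hD0 : 0 < D := by linarith
  have hbound : ∀ s ∈ Set.Icc a b, ∀ u ∈ Set.Icc a b, |x s - x u| ≤ D := by
    intro s hs u hu
    have h1 := hC s hs
    have h2 := hC u hu
    rw [Real.norm_eq_abs] at h1 h2
    have := abs_sub (x s) (x u)
    calc |x s - x u| ≤ |x s| + |x u| := abs_sub _ _
      _ ≤ D := by linarith
  obtain ⟨K, hK⟩ := exists_nat_gt ((b - a) / h)
  have hKpos : (0:ℝ) < K := lt_trans (div_pos (by linarith) hh) hK
  have hK0 : 0 < K := by exact_mod_cast hKpos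
  set L : ℝ := (b - a) / K with hL
  have hL0 : 0 < L := div_pos (by linarith) hKpos
  have hLh : L < h := by
    rw [hL, div_lt_iff₀ hKpos]
    rw [div_lt_iff₀ hh] at hK
    linarith [hK]
  set tc : ℕ → ℝ := fun j => a + j * L with htc
  have htc0 : tc 0 = a := by simp [htc]
  have htcK : tc K = b := by
    simp only [htc, hL]
    field_simp
    ring
  have htcs : ∀ j, tc j < tc (j + 1) := by
    intro j
    simp only [htc]
    push_cast
    nlinarith
  have htcd : ∀ j, tc (j + 1) - tc j = L := by
    intro j; simp only [htc]; push_cast; ring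
  have htcIcc : ∀ j ≤ K, tc j ∈ Set.Icc a b := by
    intro j hj
    constructor
    · rw [← htc0]; exact part_mono (fun j _ => htcs j) (Nat.zero_le j) hj
    · rw [← htcK]; exact part_mono (fun j _ => htcs j) hj le_rfl
  -- choose m
  have heq : ∀ᶠ m : ℕ in atTop,
      (K:ℝ) * ((m:ℝ) * (D / m) ^ q) = ((K:ℝ) * D ^ q) * (m:ℝ) ^ (1 - q) := by
    filter_upwards [eventually_gt_atTop 0] with m hm
    have hm' : (0:ℝ) < m := by exact_mod_cast hm
    rw [Real.div_rpow hD0.le (Nat.cast_nonneg m), Real.rpow_sub hm', Real.rpow_one]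
    field_simp
  have hlim0 : Tendsto (fun m : ℕ => ((K:ℝ) * D ^ q) * (m:ℝ) ^ (1 - q)) atTop (nhds 0) := by
    have h1 : Tendsto (fun m : ℕ => (m:ℝ) ^ (1 - q)) atTop (nhds 0) := by
      have := (tendsto_rpow_neg_atTop (by linarith : (0:ℝ) < q - 1)).comp
        (tendsto_natCast_atTop_atTop (R := ℝ))
      have hqe : -(q - 1) = 1 - q := by ring
      simpa [Function.comp_def, hqe] using this
    simpa using h1.const_mul ((K:ℝ) * D ^ q)
  have hlim : Tendsto (fun m : ℕ => (K:ℝ) * ((m:ℝ) * (D / m) ^ q)) atTop (nhds 0) :=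
    hlim0.congr' (heq.mono fun m hm => hm.symm)
  have hev : ∀ᶠ m : ℕ in atTop, (K:ℝ) * ((m:ℝ) * (D / m) ^ q) < ε :=
    hlim.eventually (gt_mem_nhds hε)
  obtain ⟨m, hmε, hm0⟩ := (hev.and (eventually_gt_atTop 0)).exists
  have hm' : (0:ℝ) < m := by exact_mod_cast hm0
  -- subdivide each piece by chain
  have hH : ∀ j < K, ∃ (v : ℕ → ℝ) (M : ℕ),
      IsPart x (tc j) (tc (j + 1)) h ((m:ℝ) * (D / m) ^ q) q v M := by
    intro j hj
    obtain ⟨v, M, hM0, hv0, hvM, hvs, hvsum⟩ := chain hx (htcs j) (by linarith : (0:ℝ) < q) hm0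
    refine ⟨v, M, hM0, hv0, hvM, hvs, ?_, ?_⟩
    · -- mesh
      intro i hi
      have h1 : v 0 ≤ v i := part_mono hvs (Nat.zero_le i) (by omega)
      have h2 : v (i + 1) ≤ v M := part_mono hvs (by omega) le_rfl
      rw [hv0] at h1
      rw [hvM] at h2
      have := htcd j
      linarith
    · refine hvsum.trans ?_
      have habs : |x (tc (j + 1)) - x (tc j)| ≤ D :=
        hbound _ (htcIcc (j+1) (by omega)) _ (htcIcc j (by omega))
      have : (|x (tc (j + 1)) - x (tc j)| / m) ^ q ≤ (D / m) ^ q := by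
        apply Real.rpow_le_rpow (by positivity) _ (by linarith)
        gcongr
      nlinarith [this]
  obtain ⟨t', N', hp', _⟩ := refineStep hK0 hH
  rw [htc0, htcK] at hp'
  exact ⟨t', N', hp'.mono (by linarith [hmε])⟩

/-- Master construction: a refining sequence of partitions with mesh and
`q`-variation both bounded by explicit geometric sequences. -/
lemma master {x : ℝ → ℝ} (hx : Continuous x) {T q : ℝ} (hT : 0 < T) (hq : 1 < q) :
    ∃ (t : ℕ → ℕ → ℝ) (N : ℕ → ℕ),
      (∀ n, IsPart x 0 T ((T + 1) * (1/2) ^ n) ((1/2) ^ n) q (t n) (N n)) ∧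
      (∀ n, ∀ j ≤ N n, ∃ k ≤ N (n + 1), t (n + 1) k = t n j) := by
  obtain ⟨t0, N0, hp0⟩ := core hx hq hT (by linarith : (0:ℝ) < T + 1) one_pos
  have hp0' : IsPart x 0 T ((T + 1) * (1/2) ^ 0) ((1/2:ℝ) ^ 0) q t0 N0 := by
    simpa using hp0
  have hstep : ∀ n (p : (ℕ → ℝ) × ℕ),
      IsPart x 0 T ((T + 1) * (1/2) ^ n) ((1/2) ^ n) q p.1 p.2 →
      ∃ p' : (ℕ → ℝ) × ℕ,
        IsPart x 0 T ((T + 1) * (1/2) ^ (n + 1)) ((1/2) ^ (n + 1)) q p'.1 p'.2 ∧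
        ∀ j ≤ p.2, ∃ k ≤ p'.2, p'.1 k = p.1 j := by
    rintro n ⟨u, M⟩ hp
    dsimp only at hp ⊢
    obtain ⟨hM, hu0, huM, hus, _, _⟩ := hp
    have hM' : (0:ℝ) < M := by exact_mod_cast hM
    have hH : ∀ j < M, ∃ (v : ℕ → ℝ) (Kk : ℕ),
        IsPart x (u j) (u (j + 1)) ((T + 1) * (1/2) ^ (n + 1)) ((1/2) ^ (n + 1) / M) q v Kk :=
      fun j hj => core hx hq (hus j hj) (by positivity) (by positivity)
    obtain ⟨t', N', hp', hold⟩ := refineStep hM hH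
    rw [hu0, huM] at hp'
    refine ⟨(t', N'), hp'.mono (le_of_eq ?_), hold⟩
    field_simp
  classical
  let Q : ℕ → (ℕ → ℝ) × ℕ → Prop := fun n p =>
    IsPart x 0 T ((T + 1) * (1/2) ^ n) ((1/2) ^ n) q p.1 p.2
  let F : ∀ n : ℕ, {p : (ℕ → ℝ) × ℕ // Q n p} := fun n =>
    Nat.rec ⟨(t0, N0), hp0'⟩
      (fun n p => ⟨Classical.choose (hstep n p.1 p.2),
        (Classical.choose_spec (hstep n p.1 p.2)).1⟩) n
  refine ⟨fun n => (F n).1.1, fun n => (F n).1.2, fun n => (F n).2, fun n => ?_⟩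
  exact (Classical.choose_spec (hstep n (F n).1 (F n).2)).2

/-- Strengthened form of the first part of the statement. -/
lemma strong (T : ℝ) (x : ℝ → ℝ) (hT : 0 < T) (hx : ContinuousOn x (Set.Icc 0 T))
    {q : ℝ} (hq : 1 < q) :
    ∃ (t : ℕ → ℕ → ℝ) (N : ℕ → ℕ),
      (∀ n, 0 < N n) ∧
      (∀ n, t n 0 = 0) ∧ (∀ n, t n (N n) = T) ∧
      (∀ n, ∀ j < N n, t n j < t n (j + 1)) ∧
      (∀ n, ∀ j ≤ N n, ∃ k ≤ N (n + 1), t (n + 1) k = t n j) ∧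
      (∀ ε > 0, ∃ M, ∀ n ≥ M, ∀ j < N n, t n (j + 1) - t n j < ε) ∧
      (∀ n, 0 ≤ pvar x (t n) (N n) q T ∧ pvar x (t n) (N n) q T ≤ (1/2) ^ n) := by
  set y : ℝ → ℝ := fun s => x (max 0 (min s T)) with hy
  have hyc : Continuous y := by
    apply hx.comp_continuous (continuous_const.max (continuous_id.min continuous_const))
    intro s
    exact ⟨le_max_left _ _, max_le hT.le (min_le_right _ _)⟩
  have hyx : ∀ s ∈ Set.Icc 0 T, y s = x s := by
    intro s hs
    simp only [hy]
    rw [min_eq_left hs.2, max_eq_right hs.1]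
  obtain ⟨t, N, hpart, href⟩ := master hyc hT hq
  have hIcc : ∀ n, ∀ j ≤ N n, t n j ∈ Set.Icc 0 T := by
    intro n j hj
    obtain ⟨hN, ht0, htN, hts, _, _⟩ := hpart n
    constructor
    · rw [← ht0]; exact part_mono hts (Nat.zero_le j) hj
    · rw [← htN]; exact part_mono hts hj le_rfl
  have hpvar : ∀ n, pvar x (t n) (N n) q T
      = ∑ j ∈ Finset.range (N n), |y (t n (j + 1)) - y (t n j)| ^ q := by
    intro n
    unfold pvar
    refine Finset.sum_congr rfl ?_
    intro j hj
    rw [Finset.mem_range] at hj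
    rw [if_pos (hIcc n j hj.le).2, hyx _ (hIcc n j hj.le), hyx _ (hIcc n (j+1) hj)]
  refine ⟨t, N, fun n => (hpart n).1, fun n => (hpart n).2.1, fun n => (hpart n).2.2.1,
    fun n => (hpart n).2.2.2.1, href, ?_, ?_⟩
  · intro ε hε
    have hlim : Tendsto (fun n : ℕ => (T + 1) * (1/2:ℝ) ^ n) atTop (nhds 0) := by
      have := tendsto_pow_atTop_nhds_zero_of_lt_one (by norm_num : (0:ℝ) ≤ 1/2)
        (by norm_num : (1/2:ℝ) < 1)
      simpa using this.const_mul (T + 1)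
    obtain ⟨M, hM⟩ := eventually_atTop.mp (hlim.eventually (gt_mem_nhds hε))
    refine ⟨M, fun n hn j hj => ?_⟩
    exact lt_trans ((hpart n).2.2.2.2.1 j hj) (hM n hn)
  · intro n
    rw [hpvar n]
    constructor
    · exact Finset.sum_nonneg fun j _ => Real.rpow_nonneg (abs_nonneg _) q
    · exact (hpart n).2.2.2.2.2

/-- for every continuous function and every q > 1 there exists a
refining partition sequence with vanishing mesh along which the q-th variation
tends to 0; consequently the infimum over partition sequences of the variation
index equals 1. -/
theorem stmt11 (T : ℝ) (x : ℝ → ℝ)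
    (hT : 0 < T) (hx : ContinuousOn x (Set.Icc 0 T)) :
    (∀ q : ℝ, 1 < q →
      ∃ (t : ℕ → ℕ → ℝ) (N : ℕ → ℕ),
        (∀ n, 0 < N n) ∧
        (∀ n, t n 0 = 0) ∧ (∀ n, t n (N n) = T) ∧
        (∀ n, ∀ j < N n, t n j < t n (j + 1)) ∧
        (∀ n, ∀ j ≤ N n, ∃ k ≤ N (n + 1), t (n + 1) k = t n j) ∧
        (∀ ε > 0, ∃ M, ∀ n ≥ M, ∀ j < N n, t n (j + 1) - t n j < ε) ∧
        Tendsto (fun n => pvar x (t n) (N n) q T) atTop (nhds 0)) ∧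
    sInf {p : ℝ | 1 ≤ p ∧
      ∃ (t : ℕ → ℕ → ℝ) (N : ℕ → ℕ),
        (∀ n, 0 < N n) ∧
        (∀ n, t n 0 = 0) ∧ (∀ n, t n (N n) = T) ∧
        (∀ n, ∀ j < N n, t n j < t n (j + 1)) ∧
        (∀ n, ∀ j ≤ N n, ∃ k ≤ N (n + 1), t (n + 1) k = t n j) ∧
        (∀ ε > 0, ∃ M, ∀ n ≥ M, ∀ j < N n, t n (j + 1) - t n j < ε) ∧
        (∃ C : ℝ, ∀ n, pvar x (t n) (N n) p T ≤ C)} = 1 := by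
  have hmem : ∀ q : ℝ, 1 < q → q ∈ {p : ℝ | 1 ≤ p ∧
      ∃ (t : ℕ → ℕ → ℝ) (N : ℕ → ℕ),
        (∀ n, 0 < N n) ∧
        (∀ n, t n 0 = 0) ∧ (∀ n, t n (N n) = T) ∧
        (∀ n, ∀ j < N n, t n j < t n (j + 1)) ∧
        (∀ n, ∀ j ≤ N n, ∃ k ≤ N (n + 1), t (n + 1) k = t n j) ∧
        (∀ ε > 0, ∃ M, ∀ n ≥ M, ∀ j < N n, t n (j + 1) - t n j < ε) ∧
        (∃ C : ℝ, ∀ n, pvar x (t n) (N n) p T ≤ C)} := by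
    intro q hq
    obtain ⟨t, N, h1, h2, h3, h4, h5, h6, h7⟩ := strong T x hT hx hq
    refine ⟨hq.le, t, N, h1, h2, h3, h4, h5, h6, 1, fun n => ?_⟩
    refine (h7 n).2.trans ?_
    exact pow_le_one₀ (by norm_num) (by norm_num)
  constructor
  · intro q hq
    obtain ⟨t, N, h1, h2, h3, h4, h5, h6, h7⟩ := strong T x hT hx hq
    refine ⟨t, N, h1, h2, h3, h4, h5, h6, ?_⟩
    refine squeeze_zero (fun n => (h7 n).1) (fun n => (h7 n).2) ?_
    exact tendsto_pow_atTop_nhds_zero_of_lt_one (by norm_num) (by norm_num)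
  · set S : Set ℝ := {p : ℝ | 1 ≤ p ∧
      ∃ (t : ℕ → ℕ → ℝ) (N : ℕ → ℕ),
        (∀ n, 0 < N n) ∧
        (∀ n, t n 0 = 0) ∧ (∀ n, t n (N n) = T) ∧
        (∀ n, ∀ j < N n, t n j < t n (j + 1)) ∧
        (∀ n, ∀ j ≤ N n, ∃ k ≤ N (n + 1), t (n + 1) k = t n j) ∧
        (∀ ε > 0, ∃ M, ∀ n ≥ M, ∀ j < N n, t n (j + 1) - t n j < ε) ∧
        (∃ C : ℝ, ∀ n, pvar x (t n) (N n) p T ≤ C)} with hSdef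
    have hb : BddBelow S := ⟨1, fun p hp => hp.1⟩
    refine le_antisymm ?_ (le_csInf ⟨2, hmem 2 one_lt_two⟩ fun p hp => hp.1)
    by_contra hcon
    push_neg at hcon
    have hq1 : 1 < (1 + sInf S) / 2 := by linarith
    have := csInf_le hb (hmem _ hq1)
    linarith
end
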